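/- arXiv:2303.01913 — 3 statements merged into one kernel-verified Lean document; each statement's English description precedes it below -/
import Mathlib

section
/- In the modified DFS on a finite directed acyclic graph (where a vertex u is pushed onto the stack only when the count of its already-popped in-neighbors equals its in-degree), every vertex is pushed onto the stack at most once. -/
/-- In-degree of `u` in the directed graph given by adjacency `adj`. -/
def inDeg {V : Type*} [Fintype V] [DecidableEq V] (adj : V → V → Bool) (u : V) : ℕ :=
  (Finset.univ.filter (fun w => adj w u = true)).card

/-- State of the modified DFS: the stack, the counters δ, the list of popped
vertices in pop order, and the total number of push operations so far. -/
structure DFSState (V : Type*) where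
  stack : List V
  count : V → ℕ
  popped : List V
  pushCount : ℕ

/-- Initial state: the start vertex `l0` is pushed, all counters are zero. -/
def initState {V : Type*} (l0 : V) : DFSState V :=
  ⟨[l0], fun _ => 0, [], 1⟩

/-- One step of the modified DFS: pop the top vertex `v` of the stack,
increment δ(u) for each out-neighbor `u` of `v`, and push (in some order)
exactly those out-neighbors whose counter thereby reaches their in-degree. -/
inductive DFSStep {V : Type*} [Fintype V] [DecidableEq V] (adj : V → V → Bool) :
    DFSState V → DFSState V → Prop
  | pop (s : DFSState V) (v : V) (rest pushes : List V)
      (hstack : s.stack = v :: rest)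
      (hperm : pushes.Perm ((Finset.univ.filter
        (fun u => adj v u = true ∧ s.count u + 1 = inDeg adj u)).toList)) :
      DFSStep adj s
        { stack := pushes ++ rest
          count := fun u => if adj v u then s.count u + 1 else s.count u
          popped := s.popped ++ [v]
          pushCount := s.pushCount + pushes.length }

/-- Reachability between DFS states by zero or more steps. -/
def Reaches {V : Type*} [Fintype V] [DecidableEq V] (adj : V → V → Bool)
    (s s' : DFSState V) : Prop :=
  Relation.ReflTransGen (DFSStep adj) s s'

/-- Graph reachability along directed edges. -/
def Reach {V : Type*} (adj : V → V → Bool) : V → V → Prop :=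
  Relation.ReflTransGen (fun a b => adj a b = true)

/-- The directed graph `adj` is acyclic. -/
def Acyclic {V : Type*} (adj : V → V → Bool) : Prop :=
  ∀ v, ¬ Relation.TransGen (fun a b => adj a b = true) v v

/-!
A vertex `u ≠ l0` is pushed exactly when its counter reaches `inDeg adj u`, i.e. when its
last in-neighbour is popped. From then on its counter can never grow again, since that would
need an in-neighbour popped a second time, so `u` is never pushed again. The start vertex
`l0` cannot be pushed again: every popped vertex is reachable from `l0`, so an edge back
into `l0` would close a cycle.
-/

theorem List.countP_lt_card_filter_univ {α : Type*} [Fintype α] {l : List α} (hl : l.Nodup)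
    {p : α → Bool} {a : α} (ha : a ∉ l) (hpa : p a = true) :
    l.countP p < (Finset.univ.filter fun x => p x = true).card := by
  classical
  rw [List.countP_eq_length_filter, ← List.toFinset_card_of_nodup (hl.filter p)]
  refine Finset.card_lt_card ((Finset.ssubset_iff_of_subset fun x hx => ?_).2 ⟨a, ?_, ?_⟩)
  · simpa using (List.mem_filter.1 (List.mem_toFinset.1 hx)).2
  · simpa using hpa
  · simp [ha]

/-- The vertices pushed so far. -/
def DFSState.pushed {V : Type*} (s : DFSState V) : List V :=
  s.stack ++ s.popped

section Invariant

variable {V : Type*} [Fintype V] [DecidableEq V] {adj : V → V → Bool} {l0 : V}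

structure DFSInvariant (adj : V → V → Bool) (l0 : V) (s : DFSState V) : Prop where
  reach_of_mem : ∀ u ∈ s.pushed, Reach adj l0 u
  count_eq : ∀ u, s.count u = s.popped.countP fun w => adj w u
  nodup : s.pushed.Nodup
  count_eq_inDeg : ∀ u ∈ s.pushed, u ≠ l0 → s.count u = inDeg adj u

theorem DFSInvariant.init (adj : V → V → Bool) (l0 : V) : DFSInvariant adj l0 (initState l0) where
  reach_of_mem u hu := by
    obtain rfl : u = l0 := by simpa [DFSState.pushed, initState] using hu
    exact Relation.ReflTransGen.refl
  count_eq u := by simp [initState]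
  nodup := by simp [DFSState.pushed, initState]
  count_eq_inDeg u hu hne := by simp_all [DFSState.pushed, initState]

namespace DFSInvariant

variable {s : DFSState V}

theorem not_mem_popped_of_mem_stack (hinv : DFSInvariant adj l0 s) {v : V} (hv : v ∈ s.stack) :
    v ∉ s.popped :=
  List.disjoint_of_nodup_append hinv.nodup hv

theorem adj_eq_false (hinv : DFSInvariant adj l0 s) {v u : V} (hv : v ∈ s.stack)
    (hu : u ∈ s.pushed) (hne : u ≠ l0) : adj v u = false := by
  by_contra hadj
  have hlt : s.count u < inDeg adj u := by
    rw [hinv.count_eq u]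
    exact List.countP_lt_card_filter_univ (List.nodup_append.1 hinv.nodup).2.1
      (hinv.not_mem_popped_of_mem_stack hv) (by simpa using hadj)
  exact hlt.ne (hinv.count_eq_inDeg u hu hne)

theorem not_mem_pushed_of_adj (hinv : DFSInvariant adj l0 s) (hacyc : Acyclic adj) {v u : V}
    (hv : v ∈ s.stack) (hadj : adj v u = true) (hcount : s.count u + 1 = inDeg adj u) :
    u ∉ s.pushed := by
  intro hu
  by_cases hne : u = l0
  · subst hne
    exact hacyc u (Relation.TransGen.tail' (hinv.reach_of_mem v (List.mem_append_left _ hv)) hadj)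
  · rw [hinv.count_eq_inDeg u hu hne] at hcount
    omega

theorem step (hinv : DFSInvariant adj l0 s) (hacyc : Acyclic adj) {s' : DFSState V}
    (hstep : DFSStep adj s s') : DFSInvariant adj l0 s' := by
  cases hstep with
  | pop v rest pushes hstack hperm =>
    have mem_pushes : ∀ u, u ∈ pushes ↔ adj v u = true ∧ s.count u + 1 = inDeg adj u := by
      intro u
      simp [hperm.mem_iff]
    have hv : v ∈ s.stack := by simp [hstack]
    have pushed_perm : (pushes ++ rest ++ (s.popped ++ [v])).Perm (pushes ++ s.pushed) := by
      simp only [DFSState.pushed, hstack, List.append_assoc, List.perm_append_left_iff]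
      simpa using (List.perm_append_comm (l₁ := rest ++ s.popped) (l₂ := [v]))
    have mem_pushed : ∀ u, u ∈ pushes ++ rest ++ (s.popped ++ [v]) ↔ u ∈ pushes ∨ u ∈ s.pushed :=
      fun u => by simpa using pushed_perm.mem_iff
    refine ⟨fun u hu => ?_, fun u => ?_, ?_, fun u hu hne => ?_⟩
    · rcases (mem_pushed u).1 hu with hp | hp
      · exact (hinv.reach_of_mem v (List.mem_append_left _ hv)).tail ((mem_pushes u).1 hp).1
      · exact hinv.reach_of_mem u hp
    · simp only [List.countP_append, hinv.count_eq u]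
      cases h : adj v u <;> simp [h]
    · refine pushed_perm.nodup_iff.2 (List.nodup_append.2 ⟨?_, hinv.nodup, ?_⟩)
      · exact hperm.nodup_iff.2 (Finset.nodup_toList _)
      · rintro u hp u' hu' rfl
        obtain ⟨hadj, hcount⟩ := (mem_pushes u).1 hp
        exact hinv.not_mem_pushed_of_adj hacyc hv hadj hcount hu'
    · rcases (mem_pushed u).1 hu with hp | hp
      · obtain ⟨hadj, hcount⟩ := (mem_pushes u).1 hp
        simpa [hadj] using hcount
      · simpa [hinv.adj_eq_false hv hp hne] using hinv.count_eq_inDeg u hp hne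

end DFSInvariant

end Invariant

/-- In the modified DFS on a finite DAG, every vertex is pushed
onto the stack at most once: in any reachable state, the number of occurrences
of `u` on the stack plus in the popped list is at most one. -/
theorem pushed_at_most_once {V : Type*} [Fintype V] [DecidableEq V]
    (adj : V → V → Bool) (hacyc : Acyclic adj) (l0 : V)
    (s : DFSState V) (hs : Reaches adj (initState l0) s) (u : V) :
    s.stack.count u + s.popped.count u ≤ 1 := by
  have hinv : DFSInvariant adj l0 s := by
    induction hs with
    | refl => exact DFSInvariant.init adj l0
    | tail _ hstep ih => exact ih.step hacyc hstep
  rw [← List.count_append]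
  exact List.nodup_iff_count_le_one.1 hinv.nodup u
end

section
/- In the modified DFS, if v is popped at some step and v ≠ l0, then every in-neighbor of v was popped at a strictly earlier step; consequently, the sequence of popped vertices forms a topological order of the subgraph induced on the popped vertices. -/
/-!
All claims follow from an invariant of the reachable states. Besides bookkeeping (`count u` is the
number of popped in-neighbours of `u`, the stack and the popped list are disjoint and duplicate-free)
it says that every vertex of the stack other than `l0` has all its in-neighbours popped, and that
every vertex met so far is reachable from `l0`. Reachability and acyclicity forbid an edge back into
a vertex already met, so the out-neighbours pushed when `v` is popped are new, and `v` itself joins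
the popped list after all of its in-neighbours.
-/

theorem List.Nodup.mem_of_countP_eq_card {α : Type*} [Fintype α] [DecidableEq α] {l : List α}
    (hl : l.Nodup) {p : α → Bool}
    (h : l.countP p = (Finset.univ.filter (fun a => p a = true)).card) {a : α} (ha : p a = true) :
    a ∈ l := by
  have hsub : (l.filter p).toFinset ⊆ Finset.univ.filter (fun a => p a = true) := by
    intro x hx
    simpa using (List.mem_filter.mp (List.mem_toFinset.mp hx)).2
  have hcard : (l.filter p).toFinset.card = l.countP p := by
    rw [List.toFinset_card_of_nodup (hl.filter p), List.countP_eq_length_filter]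
  have heq := Finset.eq_of_subset_of_card_le hsub (by rw [hcard, h])
  have hmem : a ∈ (l.filter p).toFinset := heq ▸ by simp [ha]
  exact (List.mem_filter.mp (List.mem_toFinset.mp hmem)).1

theorem List.idxOf_lt_idxOf_append_singleton {α : Type*} [DecidableEq α] {l : List α} {a b : α}
    (ha : a ∈ l) (hb : b ∉ l) : (l ++ [b]).idxOf a < (l ++ [b]).idxOf b := by
  rw [List.idxOf_append_of_mem ha, List.idxOf_append_of_notMem hb, List.idxOf_cons_self]
  exact List.idxOf_lt_length_iff.mpr ha

theorem Acyclic.not_adj_of_reach {V : Type*} {adj : V → V → Bool} (hacyc : Acyclic adj)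
    {u v : V} (huv : Reach adj u v) : adj v u ≠ true :=
  fun hvu => hacyc u (Relation.TransGen.tail' huv hvu)

section Invariant

variable {V : Type*} [DecidableEq V] {adj : V → V → Bool} {l0 : V}

variable (adj l0) in
def InNeighborsEarlier (l : List V) : Prop :=
  ∀ v ∈ l, v ≠ l0 → ∀ u, adj u v = true → u ∈ l ∧ l.idxOf u < l.idxOf v

theorem InNeighborsEarlier.append_singleton {l : List V} {v : V}
    (hl : InNeighborsEarlier adj l0 l) (hv : v ∉ l)
    (hin : v ≠ l0 → ∀ u, adj u v = true → u ∈ l) : InNeighborsEarlier adj l0 (l ++ [v]) := by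
  intro w hw hwl u huw
  obtain hw | hw := List.mem_append.mp hw
  · obtain ⟨hu, hlt⟩ := hl w hw hwl u huw
    refine ⟨List.mem_append_left _ hu, ?_⟩
    rwa [List.idxOf_append_of_mem hu, List.idxOf_append_of_mem hw]
  · obtain rfl := List.mem_singleton.mp hw
    have hu := hin hwl u huw
    exact ⟨List.mem_append_left _ hu, List.idxOf_lt_idxOf_append_singleton hu hv⟩

variable (adj l0) in
structure DFSInvariant_s2 (s : DFSState V) : Prop where
  count_eq : ∀ u, s.count u = s.popped.countP (adj · u)
  nodup_popped : s.popped.Nodup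
  nodup_stack : s.stack.Nodup
  notMem_popped_of_mem_stack : ∀ v ∈ s.stack, v ∉ s.popped
  inNeighbors_popped : ∀ v ∈ s.stack, v ≠ l0 → ∀ w, adj w v = true → w ∈ s.popped
  reach_of_mem_popped : ∀ v ∈ s.popped, Reach adj l0 v
  reach_of_mem_stack : ∀ v ∈ s.stack, Reach adj l0 v
  topological : InNeighborsEarlier adj l0 s.popped

variable (adj l0) in
theorem dfsInvariant_initState : DFSInvariant_s2 adj l0 (initState l0) where
  count_eq := by simp [initState]
  nodup_popped := List.nodup_nil
  nodup_stack := List.nodup_singleton l0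
  notMem_popped_of_mem_stack := by simp [initState]
  inNeighbors_popped := by simp [initState]
  reach_of_mem_popped := by simp [initState]
  reach_of_mem_stack := by simp [initState, Reach, Relation.ReflTransGen.refl]
  topological := by simp [InNeighborsEarlier, initState]

theorem DFSInvariant_s2.unvisited_of_adj {s : DFSState V} (hI : DFSInvariant_s2 adj l0 s)
    (hacyc : Acyclic adj) {v u : V} (hv : v ∈ s.stack) (hvu : adj v u = true) :
    u ≠ l0 ∧ u ∉ s.popped ∧ u ∉ s.stack := by
  have hvP := hI.notMem_popped_of_mem_stack v hv
  have hul : u ≠ l0 := by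
    rintro rfl
    exact hacyc.not_adj_of_reach (hI.reach_of_mem_stack v hv) hvu
  refine ⟨hul, fun huP => hvP (hI.topological u huP hul v hvu).1,
    fun huS => hvP (hI.inNeighbors_popped u huS hul v hvu)⟩

theorem DFSInvariant_s2.step [Fintype V] (hacyc : Acyclic adj) {s t : DFSState V}
    (hst : DFSStep adj s t) (hI : DFSInvariant_s2 adj l0 s) : DFSInvariant_s2 adj l0 t := by
  obtain ⟨v, rest, pushes, hstack, hperm⟩ := hst
  have hv : v ∈ s.stack := hstack ▸ List.mem_cons_self
  have hvP := hI.notMem_popped_of_mem_stack v hv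
  have hrest : ∀ u ∈ rest, u ∈ s.stack := fun u hu => hstack ▸ List.mem_cons_of_mem v hu
  have hnodup_stack : v ∉ rest ∧ rest.Nodup := List.nodup_cons.mp (hstack ▸ hI.nodup_stack)
  have hpushes : ∀ u ∈ pushes, adj v u = true ∧ s.count u + 1 = inDeg adj u := by
    intro u hu
    simpa using (hperm.mem_iff.mp hu)
  have hnodup_popped : (s.popped ++ [v]).Nodup :=
    List.nodup_append.mpr ⟨hI.nodup_popped, List.nodup_singleton v,
      fun a ha b hb hab => hvP (by simp_all)⟩
  constructor
  · intro u
    cases h : adj v u <;> simp [h, hI.count_eq u]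
  · exact hnodup_popped
  · refine List.nodup_append.mpr ⟨hperm.nodup_iff.mpr (Finset.nodup_toList _), hnodup_stack.2,
      fun a ha b hb hab => ?_⟩
    exact (hI.unvisited_of_adj hacyc hv (hpushes a ha).1).2.2 (hab ▸ hrest b hb)
  · simp only [List.mem_append, List.mem_singleton]
    rintro u (hu | hu) (huP | rfl)
    · exact (hI.unvisited_of_adj hacyc hv (hpushes u hu).1).2.1 huP
    · exact (hI.unvisited_of_adj hacyc hv (hpushes u hu).1).2.2 hv
    · exact hI.notMem_popped_of_mem_stack u (hrest u hu) huP
    · exact hnodup_stack.1 hu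
  · intro u hu hul w hwu
    obtain hu | hu := List.mem_append.mp hu
    · obtain ⟨hvu, hcount⟩ := hpushes u hu
      refine hnodup_popped.mem_of_countP_eq_card (p := (adj · u)) ?_ hwu
      simp [List.countP_append, ← hI.count_eq u, hvu, hcount, inDeg]
    · exact List.mem_append_left _ (hI.inNeighbors_popped u (hrest u hu) hul w hwu)
  · intro u hu
    obtain hu | hu := List.mem_append.mp hu
    · exact hI.reach_of_mem_popped u hu
    · exact List.mem_singleton.mp hu ▸ hI.reach_of_mem_stack v hv
  · intro u hu
    obtain hu | hu := List.mem_append.mp hu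
    · exact Relation.ReflTransGen.tail (hI.reach_of_mem_stack v hv) (hpushes u hu).1
    · exact hI.reach_of_mem_stack u (hrest u hu)
  · exact hI.topological.append_singleton hvP (hI.inNeighbors_popped v hv)

theorem Reaches.dfsInvariant [Fintype V] (hacyc : Acyclic adj) {s : DFSState V}
    (hs : Reaches adj (initState l0) s) : DFSInvariant_s2 adj l0 s := by
  induction hs with
  | refl => exact dfsInvariant_initState adj l0
  | tail _ hst ih => exact ih.step hacyc hst

end Invariant

/-- if `v` is popped and `v ≠ l0`, then every in-neighbor of `v`
was popped at a strictly earlier step; consequently the popped sequence is a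
topological order of the subgraph induced on the popped vertices. -/
theorem popped_topological {V : Type*} [Fintype V] [DecidableEq V]
    (adj : V → V → Bool) (hacyc : Acyclic adj) (l0 : V)
    (s : DFSState V) (hs : Reaches adj (initState l0) s) :
    (∀ v ∈ s.popped, v ≠ l0 → ∀ u, adj u v = true →
      u ∈ s.popped ∧ s.popped.idxOf u < s.popped.idxOf v) ∧
    (∀ u ∈ s.popped, ∀ v ∈ s.popped, adj u v = true →
      s.popped.idxOf u < s.popped.idxOf v) := by
  have hI := hs.dfsInvariant hacyc
  refine ⟨hI.topological, fun u hu v hv huv => ?_⟩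
  by_cases hvl : v = l0
  · subst hvl
    exact absurd huv (hacyc.not_adj_of_reach (hI.reach_of_mem_popped u hu))
  · exact (hI.topological v hv hvl u huv).2
end

section
/- If a finite DAG G has a unique source s and a unique sink t and every vertex lies on a path from s to t, then the modified DFS started at s pops every vertex of G, and t is popped last with the stack empty thereafter. -/
/-! The modified DFS maintains the invariant `DFSInv`: popped vertices and stack together are
repetition-free, the counter of `u` is the number of popped in-neighbours of `u`, and `u` has been
pushed exactly when all its in-neighbours have been popped (initially this holds because `s` is the
only vertex without in-neighbours). Every step pops a new vertex, so the stack eventually empties;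
by well-founded induction along the acyclic edge relation every vertex has then been popped. The
vertex `v` popped last has no out-neighbour `u`: `u` would have been popped before `v`, and then so
would all in-neighbours of `u`, `v` among them. Hence `v` is the unique sink `t`. -/

section

variable {V : Type*} {adj : V → V → Bool}

theorem Acyclic.wellFounded [Finite V] (h : Acyclic adj) :
    WellFounded (fun a b => adj a b = true) :=
  haveI : Std.Irrefl (Relation.TransGen fun a b => adj a b = true) := ⟨h⟩
  (Finite.wellFounded_of_trans_of_irrefl (Relation.TransGen fun a b => adj a b = true)).mono
    fun _ _ h => .single h

structure DFSInv (adj : V → V → Bool) (st : DFSState V) : Prop where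
  nodup : (st.popped ++ st.stack).Nodup
  count_eq : ∀ u, st.count u = st.popped.countP (adj · u)
  mem_iff : ∀ u, u ∈ st.popped ++ st.stack ↔ ∀ w, adj w u = true → w ∈ st.popped

namespace DFSInv

theorem initState {s : V} (hsource : ∀ v, (∀ u, adj u v = false) ↔ v = s) :
    DFSInv adj (initState s) where
  nodup := List.nodup_singleton s
  count_eq _ := rfl
  mem_iff u := by
    simp only [_root_.initState, List.nil_append, List.mem_singleton, List.not_mem_nil,
      imp_false, Bool.not_eq_true]
    exact (hsource u).symm

theorem mem_popped_of_stack_eq_nil [Finite V] (hacyc : Acyclic adj) {st : DFSState V}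
    (h : DFSInv adj st) (hnil : st.stack = []) (v : V) : v ∈ st.popped := by
  induction v using hacyc.wellFounded.induction with
  | _ v ih => simpa [hnil] using (h.mem_iff v).2 ih

theorem adj_eq_false_of_pop_exhausts (hacyc : Acyclic adj) {st : DFSState V} {v : V}
    {rest : List V} (h : DFSInv adj st) (hstack : st.stack = v :: rest)
    (hall : ∀ u, u ∈ st.popped ++ [v]) (u : V) : adj v u = false := by
  rw [← Bool.not_eq_true]
  intro hvu
  rcases List.mem_append.1 (hall u) with hu | hu
  · have hv : v ∈ st.popped := (h.mem_iff u).1 (List.mem_append_left _ hu) v hvu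
    exact (List.nodup_append.1 h.nodup).2.2 v hv v (by simp [hstack]) rfl
  · rw [List.mem_singleton.1 hu] at hvu
    exact hacyc v (.single hvu)

end DFSInv

variable [Fintype V] [DecidableEq V]

theorem List.Nodup.countP_adj_eq_inDeg_iff {l : List V} (hl : l.Nodup) (u : V) :
    l.countP (adj · u) = inDeg adj u ↔ ∀ w, adj w u = true → w ∈ l := by
  have hcard : l.countP (adj · u) = (l.toFinset.filter (adj · u)).card := by
    rw [List.countP_eq_length_filter, ← List.toFinset_card_of_nodup (hl.filter _),
      List.toFinset_filter]
  have hsub : l.toFinset.filter (adj · u) ⊆ Finset.univ.filter (adj · u) :=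
    Finset.filter_subset_filter _ (Finset.subset_univ _)
  rw [hcard, inDeg, ← (Finset.card_le_card hsub).ge_iff_eq, Finset.eq_iff_card_le_of_subset hsub,
    Finset.ext_iff]
  simp

namespace DFSInv

theorem step {st st' : DFSState V} (h : DFSInv adj st) (hstep : DFSStep adj st st') :
    DFSInv adj st' := by
  obtain ⟨v, rest, pushes, hstack, hperm⟩ := hstep
  have hnodup : (st.popped ++ [v]).Nodup :=
    h.nodup.sublist (by simp [hstack])
  have hv : v ∉ st.popped := fun hv =>
    (List.nodup_append.1 hnodup).2.2 v hv v (List.mem_singleton_self v) rfl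
  have hcount : ∀ u, (if adj v u then st.count u + 1 else st.count u) =
      (st.popped ++ [v]).countP (adj · u) := by
    intro u
    split_ifs with hu <;> simp [List.countP_append, h.count_eq, hu]
  have hpushes : ∀ u, u ∈ pushes ↔
      adj v u = true ∧ ∀ w, adj w u = true → w ∈ st.popped ++ [v] := by
    intro u
    rw [hperm.mem_iff, Finset.mem_toList, Finset.mem_filter_univ, and_congr_right_iff]
    intro hu
    rw [← hnodup.countP_adj_eq_inDeg_iff, ← hcount, if_pos hu]
  have hmem : ∀ u, u ∈ st.popped ++ [v] ++ (pushes ++ rest) ↔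
      u ∈ st.popped ++ st.stack ∨ u ∈ pushes := by
    intro u
    simp only [hstack, List.mem_append, List.mem_cons]
    tauto
  refine ⟨?_, hcount, fun u => ?_⟩
  · have hfresh : ∀ u ∈ pushes, u ∉ st.popped ++ st.stack := fun u hu hold =>
      hv ((h.mem_iff u).1 hold v ((hpushes u).1 hu).1)
    have hperm' :
        (st.popped ++ st.stack ++ pushes).Perm (st.popped ++ [v] ++ (pushes ++ rest)) := by
      rw [hstack, List.perm_iff_count]
      intro a
      simp only [List.count_append, List.count_cons, List.count_nil]
      omega
    have hpushes_nodup : pushes.Nodup := hperm.nodup_iff.2 (Finset.nodup_toList _)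
    exact hperm'.nodup_iff.1 (List.nodup_append.2
      ⟨h.nodup, hpushes_nodup, fun a ha b hb hab => hfresh b hb (hab ▸ ha)⟩)
  · rw [hmem, h.mem_iff, hpushes]
    constructor
    · rintro (hall | ⟨_, hall⟩) w hw
      · exact List.mem_append_left _ (hall w hw)
      · exact hall w hw
    · intro hall
      by_cases hu : adj v u = true
      · exact Or.inr ⟨hu, hall⟩
      · refine Or.inl fun w hw => (List.mem_append.1 (hall w hw)).resolve_right ?_
        exact fun hwv => hu (List.mem_singleton.1 hwv ▸ hw)

theorem of_reaches {st st' : DFSState V} (h : DFSInv adj st) (hr : Reaches adj st st') :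
    DFSInv adj st' := by
  induction hr with
  | refl => exact h
  | tail _ hstep ih => exact ih.step hstep

theorem exists_reaches_stack_eq_nil {st : DFSState V} (h : DFSInv adj st) :
    ∃ sf, Reaches adj st sf ∧ sf.stack = [] :=
  match hst : st.stack with
  | [] => ⟨st, .refl, hst⟩
  | v :: rest =>
    have hstep := DFSStep.pop st v rest _ hst (List.Perm.refl _)
    have := (h.step hstep).nodup.length_le_card
    let ⟨sf, hr, hnil⟩ := (h.step hstep).exists_reaches_stack_eq_nil
    ⟨sf, .head hstep hr, hnil⟩
termination_by Fintype.card V - st.popped.length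
decreasing_by
  simp only [List.length_append, List.length_singleton] at this ⊢
  omega

end DFSInv

end

theorem dfs_unique_source_sink_general {V : Type*} [Fintype V] [DecidableEq V]
    (adj : V → V → Bool) (hacyc : Acyclic adj) (s t : V)
    (hsource : ∀ v, (∀ u, adj u v = false) ↔ v = s)
    (hsink : ∀ v, (∀ u, adj v u = false) ↔ v = t) :
    (∃ sf : DFSState V, Reaches adj (initState s) sf ∧ sf.stack = []) ∧
    (∀ sf : DFSState V, Reaches adj (initState s) sf → sf.stack = [] →
      (∀ v : V, v ∈ sf.popped) ∧ sf.popped.getLast? = some t) := by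
  have hinit := DFSInv.initState hsource
  refine ⟨hinit.exists_reaches_stack_eq_nil, fun sf hr hnil => ?_⟩
  have hall := (hinit.of_reaches hr).mem_popped_of_stack_eq_nil hacyc hnil
  refine ⟨hall, ?_⟩
  obtain rfl | ⟨st, hst, hstep⟩ := Relation.ReflTransGen.cases_tail hr
  · simp [initState] at hnil
  obtain ⟨v, rest, pushes, hstack, -⟩ := hstep
  have hvt : v = t :=
    (hsink v).1 ((hinit.of_reaches hst).adj_eq_false_of_pop_exhausts hacyc hstack hall)
  simp [hvt]

/-- if a finite DAG has a unique source `s` and a unique sink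
`t` and every vertex lies on a path from `s` to `t`, then the modified DFS
started at `s` terminates, pops every vertex, and pops `t` last. -/
theorem dfs_unique_source_sink {V : Type*} [Fintype V] [DecidableEq V]
    (adj : V → V → Bool) (hacyc : Acyclic adj) (s t : V)
    (hsource : ∀ v, (∀ u, adj u v = false) ↔ v = s)
    (hsink : ∀ v, (∀ u, adj v u = false) ↔ v = t)
    (hpath : ∀ v, Reach adj s v ∧ Reach adj v t) :
    (∃ sf : DFSState V, Reaches adj (initState s) sf ∧ sf.stack = []) ∧
    (∀ sf : DFSState V, Reaches adj (initState s) sf → sf.stack = [] →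
      (∀ v : V, v ∈ sf.popped) ∧ sf.popped.getLast? = some t) :=
  dfs_unique_source_sink_general adj hacyc s t hsource hsink
end
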